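/- Degenerate case forces non-fullness (proof of Theorem 3.1): in the S⁴ frame setup, suppose θ_{zz} + 2 ρ_z θ_z = 0 identically on ℂ and there exists a constant vector E ∈ ℝ⁵ with cosh θ(z) · ψ₄(z) + E^⊥(z) = 0 for all z ∈ ℂ. Then sinh θ ≡ 0 (so Ω₂ ≡ 0 and θ is constant), and the image f(ℂ) is contained in a real linear subspace of ℝ⁵ of dimension at most 4; in particular f is not full in S⁴. -/

import Mathlib

open Complex

noncomputable section

/-- Wirtinger derivative `∂_z` of a map `ℂ → ℂ`. -/
def wirtZ (g : ℂ → ℂ) (z : ℂ) : ℂ :=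
  (1 / 2 : ℂ) * (fderiv ℝ g z 1 - Complex.I * fderiv ℝ g z Complex.I)

/-- Wirtinger derivative `∂_z̄` of a map `ℂ → ℂ`. -/
def wirtZbar (g : ℂ → ℂ) (z : ℂ) : ℂ :=
  (1 / 2 : ℂ) * (fderiv ℝ g z 1 + Complex.I * fderiv ℝ g z Complex.I)

/-- Componentwise `∂_z` for vector-valued maps. -/
def WZ {m : ℕ} (g : ℂ → Fin m → ℂ) : ℂ → Fin m → ℂ :=
  fun z i => wirtZ (fun w => g w i) z

/-- Componentwise `∂_z̄` for vector-valued maps. -/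
def WZb {m : ℕ} (g : ℂ → Fin m → ℂ) : ℂ → Fin m → ℂ :=
  fun z i => wirtZbar (fun w => g w i) z

/-- Complex-bilinear (non-conjugating) pairing. -/
def pairC {m : ℕ} (u v : Fin m → ℂ) : ℂ := ∑ i, u i * v i

/-- Componentwise complex conjugation. -/
def conjV {m : ℕ} (u : Fin m → ℂ) : Fin m → ℂ := fun i => (starRingEnd ℂ) (u i)

/-- Complexification of a real vector. -/
def cV {m : ℕ} (u : Fin m → ℝ) : Fin m → ℂ := fun i => (u i : ℂ)

/-- Complexification of a real-vector-valued map. -/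
def Fc {m : ℕ} (f : ℂ → Fin m → ℝ) : ℂ → Fin m → ℂ := fun z => cV (f z)

/-- `∂_z` of (the complexification of) a real-valued function. -/
def dZ (ρ : ℂ → ℝ) (z : ℂ) : ℂ := wirtZ (fun w => ((ρ w : ℝ) : ℂ)) z

/-- `f : ℂ → S^n ⊂ ℝ^{n+1}` is a conformal minimal immersion with conformal factor `ρ`:
`⟨f_z, f_z⟩ = 0`, `⟨f_z, f̄_z⟩ = (1/2) e^{2ρ}`, and `f_{z z̄} = −(1/2) e^{2ρ} f`. -/
def IsConfMinImm {m : ℕ} (f : ℂ → Fin m → ℝ) (ρ : ℂ → ℝ) : Prop :=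
  ContDiff ℝ (⊤ : ℕ∞) f ∧ ContDiff ℝ (⊤ : ℕ∞) ρ ∧
  (∀ z, ∑ i, (f z i) ^ 2 = 1) ∧
  (∀ z, pairC (WZ (Fc f) z) (WZ (Fc f) z) = 0) ∧
  (∀ z, pairC (WZ (Fc f) z) (conjV (WZ (Fc f) z)) = (1 / 2 : ℂ) * (Real.exp (2 * ρ z) : ℂ)) ∧
  (∀ z i, WZb (WZ (Fc f)) z i = -(1 / 2 : ℂ) * (Real.exp (2 * ρ z) : ℂ) * Fc f z i)

/-- The Hopf field `Ω = f_{zz} − 2 ρ_z f_z`. -/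
def Hopf {m : ℕ} (f : ℂ → Fin m → ℝ) (ρ : ℂ → ℝ) : ℂ → Fin m → ℂ :=
  fun z i => WZ (WZ (Fc f)) z i - 2 * dZ ρ z * WZ (Fc f) z i

/-- Real part `Ω₁` of the Hopf field, viewed in `ℂ^{n+1}`. -/
def HopfRe {m : ℕ} (f : ℂ → Fin m → ℝ) (ρ : ℂ → ℝ) : ℂ → Fin m → ℂ :=
  fun z i => ((Hopf f ρ z i).re : ℂ)

/-- Imaginary part `Ω₂` of the Hopf field, viewed in `ℂ^{n+1}`. -/
def HopfIm {m : ℕ} (f : ℂ → Fin m → ℝ) (ρ : ℂ → ℝ) : ℂ → Fin m → ℂ :=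
  fun z i => ((Hopf f ρ z i).im : ℂ)

/-- Normal projection `E^⊥` of a constant vector `E ∈ ℝ^{n+1}`. -/
def Eperp {m : ℕ} (f : ℂ → Fin m → ℝ) (ρ : ℂ → ℝ) (E : Fin m → ℝ) : ℂ → Fin m → ℂ :=
  fun z i => (E i : ℂ) - pairC (cV E) (Fc f z) * Fc f z i
    - 2 * (Real.exp (-2 * ρ z) : ℂ) * pairC (cV E) (WZ (Fc f) z) * WZb (Fc f) z i
    - 2 * (Real.exp (-2 * ρ z) : ℂ) * pairC (cV E) (WZb (Fc f) z) * WZ (Fc f) z i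

/-- `ψ` is a normal field along `f`. -/
def IsNormalField {m : ℕ} (f : ℂ → Fin m → ℝ) (ψ : ℂ → Fin m → ℂ) : Prop :=
  ∀ z, pairC (ψ z) (Fc f z) = 0 ∧ pairC (ψ z) (WZ (Fc f) z) = 0 ∧
    pairC (ψ z) (WZb (Fc f) z) = 0

/-- Normal covariant derivative `N_z ψ = ψ_z + 2 e^{−2ρ} ⟨ψ, Ω⟩ f_z̄`. -/
def NZ {m : ℕ} (f : ℂ → Fin m → ℝ) (ρ : ℂ → ℝ) (ψ : ℂ → Fin m → ℂ) : ℂ → Fin m → ℂ :=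
  fun z i => WZ ψ z i
    + 2 * (Real.exp (-2 * ρ z) : ℂ) * pairC (ψ z) (Hopf f ρ z) * WZb (Fc f) z i

/-- Normal covariant derivative `N_z̄ ψ = ψ_z̄ + 2 e^{−2ρ} ⟨ψ, Ω̄⟩ f_z`. -/
def NZb {m : ℕ} (f : ℂ → Fin m → ℝ) (ρ : ℂ → ℝ) (ψ : ℂ → Fin m → ℂ) : ℂ → Fin m → ℂ :=
  fun z i => WZb ψ z i
    + 2 * (Real.exp (-2 * ρ z) : ℂ) * pairC (ψ z) (conjV (Hopf f ρ z)) * WZ (Fc f) z i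

/-- Normal Laplacian `Δ^⊥ ψ = 2 e^{−2ρ} (N_z̄ (N_z ψ) + N_z (N_z̄ ψ))`. -/
def LapPerp {m : ℕ} (f : ℂ → Fin m → ℝ) (ρ : ℂ → ℝ) (ψ : ℂ → Fin m → ℂ) : ℂ → Fin m → ℂ :=
  fun z i => 2 * (Real.exp (-2 * ρ z) : ℂ) * (NZb f ρ (NZ f ρ ψ) z i + NZ f ρ (NZb f ρ ψ) z i)

/-- Jacobi operator `𝓛 ψ = Δ^⊥ ψ + 2 ψ + 4 e^{−4ρ} (⟨ψ, Ω⟩ Ω̄ + ⟨ψ, Ω̄⟩ Ω)`. -/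
def Jacobi {m : ℕ} (f : ℂ → Fin m → ℝ) (ρ : ℂ → ℝ) (ψ : ℂ → Fin m → ℂ) : ℂ → Fin m → ℂ :=
  fun z i => LapPerp f ρ ψ z i + 2 * ψ z i
    + 4 * (Real.exp (-4 * ρ z) : ℂ) *
      (pairC (ψ z) (Hopf f ρ z) * conjV (Hopf f ρ z) i
        + pairC (ψ z) (conjV (Hopf f ρ z)) * Hopf f ρ z i)

/-- The S⁴ adapted frame setup: `⟨Ω, Ω⟩ ≡ 1`, `Ω₁ = cosh θ · ψ₃`, `Ω₂ = sinh θ · ψ₄`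
with `ψ₃, ψ₄` orthonormal normal fields. -/
def S4Frame (f : ℂ → Fin 5 → ℝ) (ρ : ℂ → ℝ) (ψ₃ ψ₄ : ℂ → Fin 5 → ℝ) (θ : ℂ → ℝ) : Prop :=
  ContDiff ℝ (⊤ : ℕ∞) ψ₃ ∧ ContDiff ℝ (⊤ : ℕ∞) ψ₄ ∧ ContDiff ℝ (⊤ : ℕ∞) θ ∧
  IsNormalField f (Fc ψ₃) ∧ IsNormalField f (Fc ψ₄) ∧
  (∀ z, ∑ i, (ψ₃ z i) ^ 2 = 1) ∧ (∀ z, ∑ i, (ψ₄ z i) ^ 2 = 1) ∧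
  (∀ z, ∑ i, ψ₃ z i * ψ₄ z i = 0) ∧
  (∀ z, pairC (Hopf f ρ z) (Hopf f ρ z) = 1) ∧
  (∀ z i, (Hopf f ρ z i).re = Real.cosh (θ z) * ψ₃ z i) ∧
  (∀ z i, (Hopf f ρ z i).im = Real.sinh (θ z) * ψ₄ z i)


section API

variable {g h : ℂ → ℂ} {z : ℂ}

lemma wirtZ_hasF {L : ℂ →L[ℝ] ℂ} (hg : HasFDerivAt g L z) :
    wirtZ g z = (1 / 2 : ℂ) * (L 1 - Complex.I * L Complex.I) := by
  rw [wirtZ, hg.fderiv]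

lemma wirtZbar_hasF {L : ℂ →L[ℝ] ℂ} (hg : HasFDerivAt g L z) :
    wirtZbar g z = (1 / 2 : ℂ) * (L 1 + Complex.I * L Complex.I) := by
  rw [wirtZbar, hg.fderiv]

lemma wirtZ_const (c : ℂ) : wirtZ (fun _ => c) z = 0 := by
  simp [wirtZ]

lemma wirtZbar_const (c : ℂ) : wirtZbar (fun _ => c) z = 0 := by
  simp [wirtZbar]

lemma wirtZ_mul (hg : DifferentiableAt ℝ g z) (hh : DifferentiableAt ℝ h z) :
    wirtZ (fun w => g w * h w) z = g z * wirtZ h z + wirtZ g z * h z := by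
  rw [wirtZ_hasF (hg.hasFDerivAt.fun_mul hh.hasFDerivAt), wirtZ_hasF hg.hasFDerivAt,
    wirtZ_hasF hh.hasFDerivAt]
  simp only [ContinuousLinearMap.add_apply, ContinuousLinearMap.smul_apply, smul_eq_mul]
  ring

lemma wirtZbar_mul (hg : DifferentiableAt ℝ g z) (hh : DifferentiableAt ℝ h z) :
    wirtZbar (fun w => g w * h w) z = g z * wirtZbar h z + wirtZbar g z * h z := by
  rw [wirtZbar_hasF (hg.hasFDerivAt.fun_mul hh.hasFDerivAt), wirtZbar_hasF hg.hasFDerivAt,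
    wirtZbar_hasF hh.hasFDerivAt]
  simp only [ContinuousLinearMap.add_apply, ContinuousLinearMap.smul_apply, smul_eq_mul]
  ring

lemma wirtZ_sum {ι : Type*} (s : Finset ι) (g : ι → ℂ → ℂ)
    (hg : ∀ i ∈ s, DifferentiableAt ℝ (g i) z) :
    wirtZ (fun w => ∑ i ∈ s, g i w) z = ∑ i ∈ s, wirtZ (g i) z := by
  have H : HasFDerivAt (fun w => ∑ i ∈ s, g i w) (∑ i ∈ s, fderiv ℝ (g i) z) z :=
    HasFDerivAt.fun_sum fun i hi => (hg i hi).hasFDerivAt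
  rw [wirtZ_hasF H]
  simp only [ContinuousLinearMap.sum_apply, wirtZ]
  rw [Finset.mul_sum, ← Finset.sum_sub_distrib, Finset.mul_sum]

lemma wirtZbar_sum {ι : Type*} (s : Finset ι) (g : ι → ℂ → ℂ)
    (hg : ∀ i ∈ s, DifferentiableAt ℝ (g i) z) :
    wirtZbar (fun w => ∑ i ∈ s, g i w) z = ∑ i ∈ s, wirtZbar (g i) z := by
  have H : HasFDerivAt (fun w => ∑ i ∈ s, g i w) (∑ i ∈ s, fderiv ℝ (g i) z) z :=
    HasFDerivAt.fun_sum fun i hi => (hg i hi).hasFDerivAt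
  rw [wirtZbar_hasF H]
  simp only [ContinuousLinearMap.sum_apply, wirtZbar]
  rw [Finset.mul_sum, ← Finset.sum_add_distrib, Finset.mul_sum]

lemma wirtZbar_conj (hg : DifferentiableAt ℝ g z) :
    wirtZbar (fun w => (starRingEnd ℂ) (g w)) z = (starRingEnd ℂ) (wirtZ g z) := by
  have H : HasFDerivAt (fun w => (starRingEnd ℂ) (g w))
      ((Complex.conjCLE.toContinuousLinearMap).comp (fderiv ℝ g z)) z :=
    Complex.conjCLE.toContinuousLinearMap.hasFDerivAt.comp z hg.hasFDerivAt
  rw [wirtZbar_hasF H, wirtZ]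
  simp only [ContinuousLinearMap.coe_comp', Function.comp_apply,
    ContinuousLinearEquiv.coe_coe, Complex.conjCLE_apply, map_mul, map_sub, map_div₀,
    map_one, map_ofNat, Complex.conj_I]
  ring

lemma wirtZ_conj (hg : DifferentiableAt ℝ g z) :
    wirtZ (fun w => (starRingEnd ℂ) (g w)) z = (starRingEnd ℂ) (wirtZbar g z) := by
  have H : HasFDerivAt (fun w => (starRingEnd ℂ) (g w))
      ((Complex.conjCLE.toContinuousLinearMap).comp (fderiv ℝ g z)) z :=
    Complex.conjCLE.toContinuousLinearMap.hasFDerivAt.comp z hg.hasFDerivAt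
  rw [wirtZ_hasF H, wirtZbar]
  simp only [ContinuousLinearMap.coe_comp', Function.comp_apply,
    ContinuousLinearEquiv.coe_coe, Complex.conjCLE_apply, map_mul, map_add, map_div₀,
    map_one, map_ofNat, Complex.conj_I]
  ring

end API

section API2
variable {g : ℂ → ℂ} {ρ : ℂ → ℝ} {z : ℂ}

lemma wirtZ_real_comp (hρ : DifferentiableAt ℝ ρ z) {φ : ℝ → ℝ} {d : ℝ}
    (hφ : HasDerivAt φ d (ρ z)) :
    wirtZ (fun w => ((φ (ρ w) : ℝ) : ℂ)) z = (d : ℂ) * wirtZ (fun w => ((ρ w : ℝ) : ℂ)) z := by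
  have H1 : HasFDerivAt (fun w => φ (ρ w)) (d • fderiv ℝ ρ z) z :=
    hφ.comp_hasFDerivAt z hρ.hasFDerivAt
  have H2 : HasFDerivAt (fun w => ((φ (ρ w) : ℝ) : ℂ))
      (Complex.ofRealCLM.comp (d • fderiv ℝ ρ z)) z :=
    Complex.ofRealCLM.hasFDerivAt.comp z H1
  have H3 : HasFDerivAt (fun w => ((ρ w : ℝ) : ℂ))
      (Complex.ofRealCLM.comp (fderiv ℝ ρ z)) z :=
    Complex.ofRealCLM.hasFDerivAt.comp z hρ.hasFDerivAt
  rw [wirtZ_hasF H2, wirtZ_hasF H3]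
  simp only [ContinuousLinearMap.coe_comp', Function.comp_apply,
    ContinuousLinearMap.smul_apply, smul_eq_mul, Complex.ofRealCLM_apply]
  push_cast
  ring

lemma wirtZbar_real_comp (hρ : DifferentiableAt ℝ ρ z) {φ : ℝ → ℝ} {d : ℝ}
    (hφ : HasDerivAt φ d (ρ z)) :
    wirtZbar (fun w => ((φ (ρ w) : ℝ) : ℂ)) z
      = (d : ℂ) * wirtZbar (fun w => ((ρ w : ℝ) : ℂ)) z := by
  have H1 : HasFDerivAt (fun w => φ (ρ w)) (d • fderiv ℝ ρ z) z :=
    hφ.comp_hasFDerivAt z hρ.hasFDerivAt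
  have H2 : HasFDerivAt (fun w => ((φ (ρ w) : ℝ) : ℂ))
      (Complex.ofRealCLM.comp (d • fderiv ℝ ρ z)) z :=
    Complex.ofRealCLM.hasFDerivAt.comp z H1
  have H3 : HasFDerivAt (fun w => ((ρ w : ℝ) : ℂ))
      (Complex.ofRealCLM.comp (fderiv ℝ ρ z)) z :=
    Complex.ofRealCLM.hasFDerivAt.comp z hρ.hasFDerivAt
  rw [wirtZbar_hasF H2, wirtZbar_hasF H3]
  simp only [ContinuousLinearMap.coe_comp', Function.comp_apply,
    ContinuousLinearMap.smul_apply, smul_eq_mul, Complex.ofRealCLM_apply]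
  push_cast
  ring

lemma contDiff_wirtZ (hg : ContDiff ℝ (⊤ : ℕ∞) g) : ContDiff ℝ (⊤ : ℕ∞) (wirtZ g) := by
  have h1 : ContDiff ℝ (⊤ : ℕ∞) (fderiv ℝ g) := hg.fderiv_right (by simp)
  exact contDiff_const.mul ((h1.clm_apply contDiff_const).sub
    (contDiff_const.mul (h1.clm_apply contDiff_const)))

lemma contDiff_wirtZbar (hg : ContDiff ℝ (⊤ : ℕ∞) g) : ContDiff ℝ (⊤ : ℕ∞) (wirtZbar g) := by
  have h1 : ContDiff ℝ (⊤ : ℕ∞) (fderiv ℝ g) := hg.fderiv_right (by simp)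
  exact contDiff_const.mul ((h1.clm_apply contDiff_const).add
    (contDiff_const.mul (h1.clm_apply contDiff_const)))

lemma wirt_comm (hg : ContDiff ℝ (⊤ : ℕ∞) g) (z : ℂ) :
    wirtZ (wirtZbar g) z = wirtZbar (wirtZ g) z := by
  set f' := fderiv ℝ g with hf'def
  have hd : ∀ y, HasFDerivAt g (f' y) y := fun y =>
    (hg.differentiable (by simp)).differentiableAt.hasFDerivAt
  have hf'c : ContDiff ℝ (⊤ : ℕ∞) f' := hg.fderiv_right (by simp)
  have h2 : HasFDerivAt f' (fderiv ℝ f' z) z :=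
    (hf'c.differentiable (by simp)).differentiableAt.hasFDerivAt
  set f'' := fderiv ℝ f' z with hf''def
  have symm : ∀ v w : ℂ, f'' v w = f'' w v := second_derivative_symmetric hd h2
  have Ap : ∀ v : ℂ, HasFDerivAt (fun w => f' w v)
      ((ContinuousLinearMap.apply ℝ ℂ v).comp f'') z := fun v =>
    (ContinuousLinearMap.apply ℝ ℂ v).hasFDerivAt.comp z h2
  have Hbar : HasFDerivAt (wirtZbar g)
      ((1/2 : ℂ) • (((ContinuousLinearMap.apply ℝ ℂ 1).comp f'')
        + (Complex.I • ((ContinuousLinearMap.apply ℝ ℂ Complex.I).comp f'')))) z := by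
    exact ((Ap 1).add ((Ap Complex.I).const_mul Complex.I)).const_mul (1/2 : ℂ)
  have Hz : HasFDerivAt (wirtZ g)
      ((1/2 : ℂ) • (((ContinuousLinearMap.apply ℝ ℂ 1).comp f'')
        - (Complex.I • ((ContinuousLinearMap.apply ℝ ℂ Complex.I).comp f'')))) z := by
    exact ((Ap 1).sub ((Ap Complex.I).const_mul Complex.I)).const_mul (1/2 : ℂ)
  rw [wirtZ_hasF Hbar, wirtZbar_hasF Hz]
  simp only [ContinuousLinearMap.smul_apply, ContinuousLinearMap.add_apply,
    ContinuousLinearMap.sub_apply, ContinuousLinearMap.coe_comp', Function.comp_apply,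
    ContinuousLinearMap.apply_apply, smul_eq_mul]
  rw [symm 1 Complex.I]
  ring

end API2

section Pair
variable {m : ℕ} {z : ℂ}

lemma pairC_comm (u v : Fin m → ℂ) : pairC u v = pairC v u := by
  unfold pairC; exact Finset.sum_congr rfl fun i _ => mul_comm _ _

lemma pairC_conj (u v : Fin m → ℂ) :
    (starRingEnd ℂ) (pairC u v) = pairC (conjV u) (conjV v) := by
  unfold pairC conjV; rw [map_sum]; exact Finset.sum_congr rfl fun i _ => by simp

lemma wirtZ_pairC {u v : ℂ → Fin m → ℂ}
    (hu : ∀ i, DifferentiableAt ℝ (fun w => u w i) z)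
    (hv : ∀ i, DifferentiableAt ℝ (fun w => v w i) z) :
    wirtZ (fun w => pairC (u w) (v w)) z = pairC (WZ u z) (v z) + pairC (u z) (WZ v z) := by
  unfold pairC
  rw [wirtZ_sum Finset.univ _ (fun i _ => (hu i).fun_mul (hv i))]
  rw [← Finset.sum_add_distrib]
  exact Finset.sum_congr rfl fun i _ => by
    rw [wirtZ_mul (hu i) (hv i)]; unfold WZ; ring

lemma wirtZbar_pairC {u v : ℂ → Fin m → ℂ}
    (hu : ∀ i, DifferentiableAt ℝ (fun w => u w i) z)
    (hv : ∀ i, DifferentiableAt ℝ (fun w => v w i) z) :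
    wirtZbar (fun w => pairC (u w) (v w)) z = pairC (WZb u z) (v z) + pairC (u z) (WZb v z) := by
  unfold pairC
  rw [wirtZbar_sum Finset.univ _ (fun i _ => (hu i).fun_mul (hv i))]
  rw [← Finset.sum_add_distrib]
  exact Finset.sum_congr rfl fun i _ => by
    rw [wirtZbar_mul (hu i) (hv i)]; unfold WZb; ring

end Pair

section Setup
variable {m : ℕ} {f : ℂ → Fin m → ℝ} {ρ θ : ℂ → ℝ} {z : ℂ}

lemma contDiff_Fc (hf : ContDiff ℝ (⊤ : ℕ∞) f) (i : Fin m) :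
    ContDiff ℝ (⊤ : ℕ∞) (fun w => Fc f w i) :=
  Complex.ofRealCLM.contDiff.comp (contDiff_pi.1 hf i)

lemma contDiff_Fz (hf : ContDiff ℝ (⊤ : ℕ∞) f) (i : Fin m) :
    ContDiff ℝ (⊤ : ℕ∞) (fun w => WZ (Fc f) w i) :=
  contDiff_wirtZ (contDiff_Fc hf i)

lemma contDiff_Fzb (hf : ContDiff ℝ (⊤ : ℕ∞) f) (i : Fin m) :
    ContDiff ℝ (⊤ : ℕ∞) (fun w => WZb (Fc f) w i) :=
  contDiff_wirtZbar (contDiff_Fc hf i)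

lemma contDiff_Fzz (hf : ContDiff ℝ (⊤ : ℕ∞) f) (i : Fin m) :
    ContDiff ℝ (⊤ : ℕ∞) (fun w => WZ (WZ (Fc f)) w i) :=
  contDiff_wirtZ (contDiff_Fz hf i)

lemma contDiff_ofReal (hρ : ContDiff ℝ (⊤ : ℕ∞) ρ) :
    ContDiff ℝ (⊤ : ℕ∞) (fun w => ((ρ w : ℝ) : ℂ)) :=
  Complex.ofRealCLM.contDiff.comp hρ

lemma contDiff_dZ (hρ : ContDiff ℝ (⊤ : ℕ∞) ρ) : ContDiff ℝ (⊤ : ℕ∞) (dZ ρ) :=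
  contDiff_wirtZ (contDiff_ofReal hρ)

/-- `∂_z̄` of a real-valued function is the conjugate of `∂_z`. -/
lemma wirtZbar_ofReal (hρ : ContDiff ℝ (⊤ : ℕ∞) ρ) (z : ℂ) :
    wirtZbar (fun w => ((ρ w : ℝ) : ℂ)) z = (starRingEnd ℂ) (dZ ρ z) := by
  have : (fun w => ((ρ w : ℝ) : ℂ)) = fun w => (starRingEnd ℂ) ((ρ w : ℝ) : ℂ) := by
    funext w; rw [Complex.conj_ofReal]
  rw [this]
  exact wirtZbar_conj (((contDiff_ofReal hρ).differentiable (by simp)).differentiableAt)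

lemma WZb_eq_conj_WZ (hf : ContDiff ℝ (⊤ : ℕ∞) f) (z : ℂ) (i : Fin m) :
    WZb (Fc f) z i = (starRingEnd ℂ) (WZ (Fc f) z i) :=
  wirtZbar_ofReal (contDiff_pi.1 hf i) z

/-- exp chain rule: `∂_z e^{2ρ} = 2 ρ_z e^{2ρ}`. -/
lemma wirtZ_exp (hρ : ContDiff ℝ (⊤ : ℕ∞) ρ) (z : ℂ) :
    wirtZ (fun w => ((Real.exp (2 * ρ w) : ℝ) : ℂ)) z
      = 2 * dZ ρ z * ((Real.exp (2 * ρ z) : ℝ) : ℂ) := by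
  have hd : DifferentiableAt ℝ (fun w => 2 * ρ w) z :=
    ((hρ.differentiable (by simp)).differentiableAt).const_mul 2
  have h1 := wirtZ_real_comp (ρ := fun w => 2 * ρ w) (φ := Real.exp) hd
    (Real.hasDerivAt_exp (2 * ρ z))
  have h2 := wirtZ_real_comp (ρ := ρ) (φ := fun t => 2 * t)
    ((hρ.differentiable (by simp)).differentiableAt) ((hasDerivAt_id (ρ z)).const_mul 2)
  rw [h1, show (fun w => ((2 * ρ w : ℝ) : ℂ)) = fun w => (((fun t => 2 * t) (ρ w) : ℝ) : ℂ) from rfl, h2]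
  unfold dZ
  push_cast
  ring

lemma wirtZbar_exp (hρ : ContDiff ℝ (⊤ : ℕ∞) ρ) (z : ℂ) :
    wirtZbar (fun w => ((Real.exp (2 * ρ w) : ℝ) : ℂ)) z
      = 2 * (starRingEnd ℂ) (dZ ρ z) * ((Real.exp (2 * ρ z) : ℝ) : ℂ) := by
  have hd : DifferentiableAt ℝ (fun w => 2 * ρ w) z :=
    ((hρ.differentiable (by simp)).differentiableAt).const_mul 2
  have h1 := wirtZbar_real_comp (ρ := fun w => 2 * ρ w) (φ := Real.exp) hd
    (Real.hasDerivAt_exp (2 * ρ z))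
  have h2 := wirtZbar_real_comp (ρ := ρ) (φ := fun t => 2 * t)
    ((hρ.differentiable (by simp)).differentiableAt) ((hasDerivAt_id (ρ z)).const_mul 2)
  rw [h1, show (fun w => ((2 * ρ w : ℝ) : ℂ)) = fun w => (((fun t => 2 * t) (ρ w) : ℝ) : ℂ) from rfl, h2,
    wirtZbar_ofReal hρ]
  unfold dZ
  push_cast
  ring

lemma wirtZbar_sinh (hθ : ContDiff ℝ (⊤ : ℕ∞) θ) (z : ℂ) :
    wirtZbar (fun w => ((Real.sinh (θ w) : ℝ) : ℂ)) z
      = ((Real.cosh (θ z) : ℝ) : ℂ) * (starRingEnd ℂ) (dZ θ z) := by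
  rw [wirtZbar_real_comp ((hθ.differentiable (by simp)).differentiableAt)
    (Real.hasDerivAt_sinh (θ z)), wirtZbar_ofReal hθ]

lemma wirtZbar_cosh (hθ : ContDiff ℝ (⊤ : ℕ∞) θ) (z : ℂ) :
    wirtZbar (fun w => ((Real.cosh (θ w) : ℝ) : ℂ)) z
      = ((Real.sinh (θ z) : ℝ) : ℂ) * (starRingEnd ℂ) (dZ θ z) := by
  rw [wirtZbar_real_comp ((hθ.differentiable (by simp)).differentiableAt)
    (Real.hasDerivAt_cosh (θ z)), wirtZbar_ofReal hθ]

end Setup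

section MulConst
variable {h : ℂ → ℂ} {z : ℂ}

lemma wirtZ_const_mul (c : ℂ) (hh : DifferentiableAt ℝ h z) :
    wirtZ (fun w => c * h w) z = c * wirtZ h z := by
  rw [wirtZ_mul (differentiableAt_const c) hh, wirtZ_const]; ring

lemma wirtZbar_const_mul (c : ℂ) (hh : DifferentiableAt ℝ h z) :
    wirtZbar (fun w => c * h w) z = c * wirtZbar h z := by
  rw [wirtZbar_mul (differentiableAt_const c) hh, wirtZbar_const]; ring

end MulConst

section PairAlg
variable {m : ℕ}

lemma pairC_sub_smul (u a b : Fin m → ℂ) (c : ℂ) :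
    pairC u (fun i => a i - c * b i) = pairC u a - c * pairC u b := by
  unfold pairC
  rw [Finset.mul_sum, ← Finset.sum_sub_distrib]
  exact Finset.sum_congr rfl fun i _ => by ring

end PairAlg

section CMI
variable {m : ℕ} {f : ℂ → Fin m → ℝ} {ρ : ℂ → ℝ} {z : ℂ}

lemma diffAt_Fc (hf : ContDiff ℝ (⊤ : ℕ∞) f) (i : Fin m) :
    DifferentiableAt ℝ (fun w => Fc f w i) z :=
  ((contDiff_Fc hf i).differentiable (by simp)).differentiableAt

lemma diffAt_Fz (hf : ContDiff ℝ (⊤ : ℕ∞) f) (i : Fin m) :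
    DifferentiableAt ℝ (fun w => WZ (Fc f) w i) z :=
  ((contDiff_Fz hf i).differentiable (by simp)).differentiableAt

lemma diffAt_Fzb (hf : ContDiff ℝ (⊤ : ℕ∞) f) (i : Fin m) :
    DifferentiableAt ℝ (fun w => WZb (Fc f) w i) z :=
  ((contDiff_Fzb hf i).differentiable (by simp)).differentiableAt

lemma diffAt_Fzz (hf : ContDiff ℝ (⊤ : ℕ∞) f) (i : Fin m) :
    DifferentiableAt ℝ (fun w => WZ (WZ (Fc f)) w i) z :=
  ((contDiff_Fzz hf i).differentiable (by simp)).differentiableAt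

lemma contDiff_expC : ∀ {ρ : ℂ → ℝ}, ContDiff ℝ (⊤ : ℕ∞) ρ →
    ContDiff ℝ (⊤ : ℕ∞) (fun w => ((Real.exp (2 * ρ w) : ℝ) : ℂ)) := fun hρ =>
  contDiff_ofReal (Real.contDiff_exp.comp (contDiff_const.mul hρ))

lemma cmi_pair_ff (hf : IsConfMinImm f ρ) (w : ℂ) :
    pairC (Fc f w) (Fc f w) = 1 := by
  have h := hf.2.2.1 w
  unfold pairC Fc cV
  rw [show (1 : ℂ) = ((1 : ℝ) : ℂ) by norm_num, ← h]
  push_cast [sq]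
  rfl

lemma cmi_pair_f_fz (hf : IsConfMinImm f ρ) (z : ℂ) :
    pairC (Fc f z) (WZ (Fc f) z) = 0 := by
  have hfun : (fun w => pairC (Fc f w) (Fc f w)) = fun _ => (1 : ℂ) :=
    funext fun w => cmi_pair_ff hf w
  have h0 : wirtZ (fun w => pairC (Fc f w) (Fc f w)) z = 0 := by
    rw [hfun]; exact wirtZ_const 1
  rw [wirtZ_pairC (diffAt_Fc hf.1) (diffAt_Fc hf.1)] at h0
  rw [pairC_comm] at h0
  have := h0
  linear_combination (1/2 : ℂ) * this

lemma cmi_pair_f_fzb (hf : IsConfMinImm f ρ) (z : ℂ) :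
    pairC (Fc f z) (WZb (Fc f) z) = 0 := by
  have : pairC (Fc f z) (WZb (Fc f) z)
      = (starRingEnd ℂ) (pairC (Fc f z) (WZ (Fc f) z)) := by
    unfold pairC
    rw [map_sum]
    exact Finset.sum_congr rfl fun i _ => by
      rw [map_mul, WZb_eq_conj_WZ hf.1, show (starRingEnd ℂ) (Fc f z i) = Fc f z i from
        Complex.conj_ofReal _]
  rw [this, cmi_pair_f_fz hf, map_zero]

lemma cmi_pair_f_fzz (hf : IsConfMinImm f ρ) (z : ℂ) :
    pairC (Fc f z) (WZ (WZ (Fc f)) z) = 0 := by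
  have hfun : (fun w => pairC (Fc f w) (WZ (Fc f) w)) = fun _ => (0 : ℂ) :=
    funext fun w => cmi_pair_f_fz hf w
  have h0 : wirtZ (fun w => pairC (Fc f w) (WZ (Fc f) w)) z = 0 := by
    rw [hfun]; exact wirtZ_const 0
  rw [wirtZ_pairC (diffAt_Fc hf.1) (diffAt_Fz hf.1), hf.2.2.2.1 z] at h0
  linear_combination h0

lemma cmi_pair_fz_fzz (hf : IsConfMinImm f ρ) (z : ℂ) :
    pairC (WZ (Fc f) z) (WZ (WZ (Fc f)) z) = 0 := by
  have hfun : (fun w => pairC (WZ (Fc f) w) (WZ (Fc f) w)) = fun _ => (0 : ℂ) :=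
    funext fun w => hf.2.2.2.1 w
  have h0 : wirtZ (fun w => pairC (WZ (Fc f) w) (WZ (Fc f) w)) z = 0 := by
    rw [hfun]; exact wirtZ_const 0
  rw [wirtZ_pairC (diffAt_Fz hf.1) (diffAt_Fz hf.1), pairC_comm] at h0
  linear_combination (1/2 : ℂ) * h0

lemma cmi_pair_fz_fzb (hf : IsConfMinImm f ρ) (z : ℂ) :
    pairC (WZ (Fc f) z) (WZb (Fc f) z) = (1/2 : ℂ) * ((Real.exp (2 * ρ z) : ℝ) : ℂ) := by
  have h := hf.2.2.2.2.1 z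
  have hc : conjV (WZ (Fc f) z) = WZb (Fc f) z :=
    funext fun i => (WZb_eq_conj_WZ hf.1 z i).symm
  rw [← hc]
  exact h

/-- Mixed-derivative symmetry for `Fc f`. -/
lemma cmi_mixed (hf : ContDiff ℝ (⊤ : ℕ∞) f) (z : ℂ) (i : Fin m) :
    WZ (WZb (Fc f)) z i = WZb (WZ (Fc f)) z i :=
  wirt_comm (contDiff_Fc hf i) z

lemma cmi_pair_fzz_fzb (hf : IsConfMinImm f ρ) (z : ℂ) :
    pairC (WZ (WZ (Fc f)) z) (WZb (Fc f) z)
      = dZ ρ z * ((Real.exp (2 * ρ z) : ℝ) : ℂ) := by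
  have hfun : (fun w => pairC (WZ (Fc f) w) (WZb (Fc f) w))
      = fun w => (1/2 : ℂ) * ((Real.exp (2 * ρ w) : ℝ) : ℂ) :=
    funext fun w => cmi_pair_fz_fzb hf w
  have h0 : wirtZ (fun w => pairC (WZ (Fc f) w) (WZb (Fc f) w)) z
      = wirtZ (fun w => (1/2 : ℂ) * ((Real.exp (2 * ρ w) : ℝ) : ℂ)) z := by rw [hfun]
  rw [wirtZ_pairC (diffAt_Fz hf.1) (diffAt_Fzb hf.1),
    wirtZ_const_mul _ (((contDiff_expC hf.2.1).differentiable (by simp)).differentiableAt),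
    wirtZ_exp hf.2.1] at h0
  have h1 : pairC (WZ (Fc f) z) (WZ (WZb (Fc f)) z)
      = -(1/2 : ℂ) * ((Real.exp (2 * ρ z) : ℝ) : ℂ) * pairC (WZ (Fc f) z) (Fc f z) := by
    unfold pairC
    rw [Finset.mul_sum]
    exact Finset.sum_congr rfl fun i _ => by
      rw [show WZ (WZb (Fc f)) z i = WZb (WZ (Fc f)) z i from cmi_mixed hf.1 z i,
        hf.2.2.2.2.2 z i]
      ring
  rw [h1, pairC_comm (WZ (Fc f) z), cmi_pair_f_fz hf] at h0
  linear_combination h0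

end CMI

section Hopf1
variable {m : ℕ} {f : ℂ → Fin m → ℝ} {ρ : ℂ → ℝ} {z : ℂ}

lemma pairC_hopf (u : Fin m → ℂ) :
    pairC u (Hopf f ρ z) = pairC u (WZ (WZ (Fc f)) z) - 2 * dZ ρ z * pairC u (WZ (Fc f) z) :=
  pairC_sub_smul u _ _ _

lemma hopf_f (hf : IsConfMinImm f ρ) (z : ℂ) : pairC (Fc f z) (Hopf f ρ z) = 0 := by
  rw [pairC_hopf, cmi_pair_f_fzz hf, cmi_pair_f_fz hf]; ring

lemma hopf_fz (hf : IsConfMinImm f ρ) (z : ℂ) : pairC (WZ (Fc f) z) (Hopf f ρ z) = 0 := by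
  rw [pairC_hopf, cmi_pair_fz_fzz hf, hf.2.2.2.1 z]; ring

lemma hopf_fzb (hf : IsConfMinImm f ρ) (z : ℂ) : pairC (WZb (Fc f) z) (Hopf f ρ z) = 0 := by
  rw [pairC_hopf, pairC_comm _ (WZ (WZ (Fc f)) z), cmi_pair_fzz_fzb hf,
    pairC_comm _ (WZ (Fc f) z), cmi_pair_fz_fzb hf]
  ring

lemma conjV_conjV (u : Fin m → ℂ) : conjV (conjV u) = u := by
  funext i; simp [conjV]

lemma hopf_fz_conj (hf : IsConfMinImm f ρ) (z : ℂ) :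
    pairC (WZ (Fc f) z) (conjV (Hopf f ρ z)) = 0 := by
  have h := congrArg (starRingEnd ℂ) (hopf_fzb hf z)
  rw [pairC_conj, map_zero] at h
  have hc : conjV (WZb (Fc f) z) = WZ (Fc f) z := by
    funext i
    show (starRingEnd ℂ) (WZb (Fc f) z i) = WZ (Fc f) z i
    rw [show WZb (Fc f) z i = (starRingEnd ℂ) (WZ (Fc f) z i) from WZb_eq_conj_WZ hf.1 z i]
    exact Complex.conj_conj _
  rwa [hc] at h

end Hopf1

section Bilin
variable {m : ℕ}

lemma pairC_comb2_left (a b v : Fin m → ℂ) (c d : ℂ) :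
    pairC (fun i => c * a i + d * b i) v = c * pairC a v + d * pairC b v := by
  unfold pairC
  rw [Finset.mul_sum, Finset.mul_sum, ← Finset.sum_add_distrib]
  exact Finset.sum_congr rfl fun i _ => by ring

lemma pairC_comb2_both (a b a' b' : Fin m → ℂ) (c d : ℂ) :
    pairC (fun i => a i + c * b i) (fun i => a' i + d * b' i)
      = pairC a a' + d * pairC a b' + c * pairC b a' + c * d * pairC b b' := by
  unfold pairC
  rw [Finset.mul_sum, Finset.mul_sum, Finset.mul_sum, ← Finset.sum_add_distrib,
    ← Finset.sum_add_distrib, ← Finset.sum_add_distrib]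
  exact Finset.sum_congr rfl fun i _ => by ring

end Bilin

section Gauss
variable {m : ℕ} {f : ℂ → Fin m → ℝ} {ρ : ℂ → ℝ} {z : ℂ}

lemma diffAt_expC (hρ : ContDiff ℝ (⊤ : ℕ∞) ρ) :
    DifferentiableAt ℝ (fun w => ((Real.exp (2 * ρ w) : ℝ) : ℂ)) z :=
  ((contDiff_expC hρ).differentiable (by simp)).differentiableAt

lemma diffAt_dZ (hρ : ContDiff ℝ (⊤ : ℕ∞) ρ) : DifferentiableAt ℝ (dZ ρ) z :=
  ((contDiff_dZ hρ).differentiable (by simp)).differentiableAt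

/-- Gauss equation: `ρ_{z z̄} e^{2ρ} = ⟨Ω, Ω̄⟩ − (1/4) e^{4ρ}`. -/
lemma cmi_gauss (hf : IsConfMinImm f ρ) (z : ℂ) :
    wirtZbar (dZ ρ) z * ((Real.exp (2 * ρ z) : ℝ) : ℂ)
      = pairC (Hopf f ρ z) (conjV (Hopf f ρ z))
        - (1/4 : ℂ) * ((Real.exp (2 * ρ z) : ℝ) : ℂ) * ((Real.exp (2 * ρ z) : ℝ) : ℂ) := by
  have hfs := hf.1
  have hρs := hf.2.1
  have hfun : (fun w => pairC (WZ (WZ (Fc f)) w) (WZb (Fc f) w))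
      = fun w => dZ ρ w * ((Real.exp (2 * ρ w) : ℝ) : ℂ) :=
    funext fun w => cmi_pair_fzz_fzb hf w
  have h0 : wirtZbar (fun w => pairC (WZ (WZ (Fc f)) w) (WZb (Fc f) w)) z
      = wirtZbar (fun w => dZ ρ w * ((Real.exp (2 * ρ w) : ℝ) : ℂ)) z := by rw [hfun]
  rw [wirtZbar_pairC (diffAt_Fzz hfs) (diffAt_Fzb hfs),
    wirtZbar_mul (diffAt_dZ hρs) (diffAt_expC hρs), wirtZbar_exp hρs] at h0
  -- first term: ∂z̄ f_zz = ∂z f_zz̄ = -(1/2) ∂z (e^{2ρ} f)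
  have hT1 : WZb (WZ (WZ (Fc f))) z
      = fun i => (-(1/2 : ℂ) * ((Real.exp (2 * ρ z) : ℝ) : ℂ)) * WZ (Fc f) z i
          + (-(dZ ρ z * ((Real.exp (2 * ρ z) : ℝ) : ℂ))) * Fc f z i := by
    funext i
    have e1 : WZb (WZ (WZ (Fc f))) z i = wirtZ (fun w => WZb (WZ (Fc f)) w i) z :=
      (wirt_comm (contDiff_Fz hfs i) z).symm
    have e2 : (fun w => WZb (WZ (Fc f)) w i)
        = fun w => -(1/2 : ℂ) * (((Real.exp (2 * ρ w) : ℝ) : ℂ) * Fc f w i) :=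
      funext fun w => by rw [hf.2.2.2.2.2 w i]; ring
    rw [e1, e2, wirtZ_const_mul _ ((diffAt_expC hρs).fun_mul (diffAt_Fc hfs i)),
      wirtZ_mul (diffAt_expC hρs) (diffAt_Fc hfs i), wirtZ_exp hρs]
    simp only [WZ]
    ring
  have hP1 : pairC (WZb (WZ (WZ (Fc f))) z) (WZb (Fc f) z)
      = -(1/4 : ℂ) * ((Real.exp (2 * ρ z) : ℝ) : ℂ) * ((Real.exp (2 * ρ z) : ℝ) : ℂ) := by
    rw [hT1, pairC_comb2_left, cmi_pair_fz_fzb hf, cmi_pair_f_fzb hf]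
    ring
  have hT2 : WZb (WZb (Fc f)) z = conjV (WZ (WZ (Fc f)) z) := by
    funext i
    have e : (fun w => WZb (Fc f) w i) = fun w => (starRingEnd ℂ) (WZ (Fc f) w i) :=
      funext fun w => WZb_eq_conj_WZ hfs w i
    show wirtZbar (fun w => WZb (Fc f) w i) z = _
    rw [e]
    exact wirtZbar_conj (diffAt_Fz hfs i)
  have hconjWZ : conjV (WZ (Fc f) z) = WZb (Fc f) z :=
    funext fun i => (WZb_eq_conj_WZ hfs z i).symm
  have hFzz : WZ (WZ (Fc f)) z = fun i => Hopf f ρ z i + (2 * dZ ρ z) * WZ (Fc f) z i := by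
    funext i; simp only [Hopf]; ring
  have hconjFzz : conjV (WZ (WZ (Fc f)) z)
      = fun i => conjV (Hopf f ρ z) i
          + ((starRingEnd ℂ) (2 * dZ ρ z)) * conjV (WZ (Fc f) z) i := by
    funext i
    show (starRingEnd ℂ) (WZ (WZ (Fc f)) z i) = _
    rw [show WZ (WZ (Fc f)) z i = Hopf f ρ z i + (2 * dZ ρ z) * WZ (Fc f) z i from
      congrFun hFzz i, map_add, map_mul]
    rfl
  have hP2 : pairC (WZ (WZ (Fc f)) z) (WZb (WZb (Fc f)) z)
      = pairC (Hopf f ρ z) (conjV (Hopf f ρ z))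
        + 2 * dZ ρ z * (starRingEnd ℂ) (dZ ρ z) * ((Real.exp (2 * ρ z) : ℝ) : ℂ) := by
    rw [hT2]
    nth_rewrite 1 [hFzz]
    rw [hconjFzz, pairC_comb2_both, hconjWZ, pairC_comm (Hopf f ρ z) (WZb (Fc f) z),
      hopf_fzb hf, hopf_fz_conj hf, cmi_pair_fz_fzb hf, map_mul,
      show (starRingEnd ℂ) (2 : ℂ) = 2 from map_ofNat _ 2]
    ring
  rw [hP1, hP2] at h0
  linear_combination -h0

end Gauss

section Helpers
variable {m : ℕ} {z : ℂ}

lemma pairC_smul_right (u v : Fin m → ℂ) (c : ℂ) :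
    pairC u (fun i => c * v i) = c * pairC u v := by
  unfold pairC
  rw [Finset.mul_sum]
  exact Finset.sum_congr rfl fun i _ => by ring

lemma wirtZ_pairC_const (E : Fin m → ℂ) {v : ℂ → Fin m → ℂ}
    (hv : ∀ i, DifferentiableAt ℝ (fun w => v w i) z) :
    wirtZ (fun w => pairC E (v w)) z = pairC E (WZ v z) := by
  unfold pairC
  rw [wirtZ_sum Finset.univ _ (fun i _ => (differentiableAt_const (E i)).fun_mul (hv i))]
  exact Finset.sum_congr rfl fun i _ => wirtZ_const_mul (E i) (hv i)

lemma wirtZbar_pairC_const (E : Fin m → ℂ) {v : ℂ → Fin m → ℂ}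
    (hv : ∀ i, DifferentiableAt ℝ (fun w => v w i) z) :
    wirtZbar (fun w => pairC E (v w)) z = pairC E (WZb v z) := by
  unfold pairC
  rw [wirtZbar_sum Finset.univ _ (fun i _ => (differentiableAt_const (E i)).fun_mul (hv i))]
  exact Finset.sum_congr rfl fun i _ => wirtZbar_const_mul (E i) (hv i)

lemma pairC_Eperp {f : ℂ → Fin m → ℝ} {ρ : ℂ → ℝ} (u : Fin m → ℂ) (E : Fin m → ℝ) :
    pairC u (Eperp f ρ E z)
      = pairC u (cV E)
        - pairC (cV E) (Fc f z) * pairC u (Fc f z)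
        - 2 * ((Real.exp (-2 * ρ z) : ℝ) : ℂ) * pairC (cV E) (WZ (Fc f) z)
            * pairC u (WZb (Fc f) z)
        - 2 * ((Real.exp (-2 * ρ z) : ℝ) : ℂ) * pairC (cV E) (WZb (Fc f) z)
            * pairC u (WZ (Fc f) z) := by
  unfold Eperp
  set α := pairC (cV E) (Fc f z) with hα
  set β := pairC (cV E) (WZ (Fc f) z) with hβ
  set γ := pairC (cV E) (WZb (Fc f) z) with hγ
  unfold pairC
  rw [Finset.mul_sum, Finset.mul_sum, Finset.mul_sum, ← Finset.sum_sub_distrib,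
    ← Finset.sum_sub_distrib, ← Finset.sum_sub_distrib]
  exact Finset.sum_congr rfl fun i _ => by unfold cV; ring

end Helpers

section Frame
variable {f : ℂ → Fin 5 → ℝ} {ρ θ : ℂ → ℝ} {ψ₃ ψ₄ : ℂ → Fin 5 → ℝ} {z : ℂ}

lemma fr_hopf_decomp (hRe : ∀ z i, (Hopf f ρ z i).re = Real.cosh (θ z) * ψ₃ z i)
    (hIm : ∀ z i, (Hopf f ρ z i).im = Real.sinh (θ z) * ψ₄ z i) (z : ℂ) (i : Fin 5) :
    Hopf f ρ z i = ((Real.cosh (θ z) * ψ₃ z i : ℝ) : ℂ)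
      + ((Real.sinh (θ z) * ψ₄ z i : ℝ) : ℂ) * Complex.I := by
  rw [← hRe z i, ← hIm z i]
  exact (Complex.re_add_im _).symm

lemma fr_pair_psi4_hopf (hRe : ∀ z i, (Hopf f ρ z i).re = Real.cosh (θ z) * ψ₃ z i)
    (hIm : ∀ z i, (Hopf f ρ z i).im = Real.sinh (θ z) * ψ₄ z i)
    (hu4 : ∀ z, ∑ i, (ψ₄ z i) ^ 2 = 1)
    (hortho : ∀ z, ∑ i, ψ₃ z i * ψ₄ z i = 0) (z : ℂ) :
    pairC (Fc ψ₄ z) (Hopf f ρ z) = Complex.I * ((Real.sinh (θ z) : ℝ) : ℂ) := by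
  have e : ∀ i ∈ Finset.univ, Fc ψ₄ z i * Hopf f ρ z i
      = (((ψ₄ z i * (Real.cosh (θ z) * ψ₃ z i)) : ℝ) : ℂ)
        + (((ψ₄ z i * (Real.sinh (θ z) * ψ₄ z i)) : ℝ) : ℂ) * Complex.I := by
    intro i _
    rw [fr_hopf_decomp hRe hIm z i]
    show ((ψ₄ z i : ℝ) : ℂ) * _ = _
    push_cast
    ring
  unfold pairC
  rw [Finset.sum_congr rfl e, Finset.sum_add_distrib, ← Finset.sum_mul,
    ← Complex.ofReal_sum, ← Complex.ofReal_sum]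
  have e1 : ∑ i, ψ₄ z i * (Real.cosh (θ z) * ψ₃ z i) = 0 := by
    have : ∑ i, ψ₄ z i * (Real.cosh (θ z) * ψ₃ z i)
        = Real.cosh (θ z) * ∑ i, ψ₃ z i * ψ₄ z i := by
      rw [Finset.mul_sum]; exact Finset.sum_congr rfl fun i _ => by ring
    rw [this, hortho z, mul_zero]
  have e2 : ∑ i, ψ₄ z i * (Real.sinh (θ z) * ψ₄ z i) = Real.sinh (θ z) := by
    have : ∑ i, ψ₄ z i * (Real.sinh (θ z) * ψ₄ z i)
        = Real.sinh (θ z) * ∑ i, (ψ₄ z i) ^ 2 := by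
      rw [Finset.mul_sum]; exact Finset.sum_congr rfl fun i _ => by ring
    rw [this, hu4 z, mul_one]
  rw [e1, e2]
  push_cast
  ring

lemma fr_pair_psi4_psi4 (hu4 : ∀ z, ∑ i, (ψ₄ z i) ^ 2 = 1) (z : ℂ) :
    pairC (Fc ψ₄ z) (Fc ψ₄ z) = 1 := by
  unfold pairC Fc cV
  rw [show (1 : ℂ) = ((1 : ℝ) : ℂ) by norm_num, ← hu4 z]
  push_cast [sq]
  rfl

lemma fr_hopf_normSq (hRe : ∀ z i, (Hopf f ρ z i).re = Real.cosh (θ z) * ψ₃ z i)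
    (hIm : ∀ z i, (Hopf f ρ z i).im = Real.sinh (θ z) * ψ₄ z i)
    (hu3 : ∀ z, ∑ i, (ψ₃ z i) ^ 2 = 1) (hu4 : ∀ z, ∑ i, (ψ₄ z i) ^ 2 = 1) (z : ℂ) :
    pairC (Hopf f ρ z) (conjV (Hopf f ρ z))
      = ((Real.cosh (θ z) ^ 2 + Real.sinh (θ z) ^ 2 : ℝ) : ℂ) := by
  have e : ∀ i ∈ Finset.univ, Hopf f ρ z i * conjV (Hopf f ρ z) i
      = (((Real.cosh (θ z) * ψ₃ z i) ^ 2 + (Real.sinh (θ z) * ψ₄ z i) ^ 2 : ℝ) : ℂ) := by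
    intro i _
    show Hopf f ρ z i * (starRingEnd ℂ) (Hopf f ρ z i) = _
    rw [Complex.mul_conj, Complex.normSq_apply, hRe, hIm]
    push_cast
    ring
  unfold pairC
  rw [Finset.sum_congr rfl e, ← Complex.ofReal_sum]
  congr 1
  rw [Finset.sum_add_distrib]
  have e1 : ∑ i, (Real.cosh (θ z) * ψ₃ z i) ^ 2 = Real.cosh (θ z) ^ 2 := by
    have : ∑ i, (Real.cosh (θ z) * ψ₃ z i) ^ 2
        = Real.cosh (θ z) ^ 2 * ∑ i, (ψ₃ z i) ^ 2 := by
      rw [Finset.mul_sum]; exact Finset.sum_congr rfl fun i _ => by ring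
    rw [this, hu3 z, mul_one]
  have e2 : ∑ i, (Real.sinh (θ z) * ψ₄ z i) ^ 2 = Real.sinh (θ z) ^ 2 := by
    have : ∑ i, (Real.sinh (θ z) * ψ₄ z i) ^ 2
        = Real.sinh (θ z) ^ 2 * ∑ i, (ψ₄ z i) ^ 2 := by
      rw [Finset.mul_sum]; exact Finset.sum_congr rfl fun i _ => by ring
    rw [this, hu4 z, mul_one]
  rw [e1, e2]

lemma fr_pair_Eperp {E : Fin 5 → ℝ}
    (hEq : ∀ (z : ℂ) (i : Fin 5),
      ((Real.cosh (θ z) : ℝ) : ℂ) * ((ψ₄ z i : ℝ) : ℂ) + Eperp f ρ E z i = 0)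
    (u : Fin 5 → ℂ) (z : ℂ) :
    pairC u (Eperp f ρ E z) = -((Real.cosh (θ z) : ℝ) : ℂ) * pairC u (Fc ψ₄ z) := by
  have e : ∀ i ∈ Finset.univ, u i * Eperp f ρ E z i
      = -((Real.cosh (θ z) : ℝ) : ℂ) * (u i * Fc ψ₄ z i) := by
    intro i _
    have h := hEq z i
    show u i * Eperp f ρ E z i = -((Real.cosh (θ z) : ℝ) : ℂ) * (u i * ((ψ₄ z i : ℝ) : ℂ))
    linear_combination u i * h
  unfold pairC
  rw [Finset.sum_congr rfl e, ← Finset.mul_sum]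

end Frame

section API3
variable {g h : ℂ → ℂ} {z : ℂ}

lemma wirtZbar_add (hg : DifferentiableAt ℝ g z) (hh : DifferentiableAt ℝ h z) :
    wirtZbar (fun w => g w + h w) z = wirtZbar g z + wirtZbar h z := by
  rw [wirtZbar_hasF (hg.hasFDerivAt.fun_add hh.hasFDerivAt), wirtZbar_hasF hg.hasFDerivAt,
    wirtZbar_hasF hh.hasFDerivAt]
  simp only [ContinuousLinearMap.add_apply]
  ring

lemma contDiff_pairC_const {m : ℕ} (E : Fin m → ℂ) {v : ℂ → Fin m → ℂ}
    (hv : ∀ i, ContDiff ℝ (⊤ : ℕ∞) (fun w => v w i)) :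
    ContDiff ℝ (⊤ : ℕ∞) (fun w => pairC E (v w)) := by
  unfold pairC
  exact ContDiff.sum fun i _ => contDiff_const.mul (hv i)

lemma contDiff_sinhC {θ : ℂ → ℝ} (hθ : ContDiff ℝ (⊤ : ℕ∞) θ) :
    ContDiff ℝ (⊤ : ℕ∞) (fun w => ((Real.sinh (θ w) : ℝ) : ℂ)) :=
  contDiff_ofReal (Real.contDiff_sinh.comp hθ)

lemma contDiff_coshC {θ : ℂ → ℝ} (hθ : ContDiff ℝ (⊤ : ℕ∞) θ) :
    ContDiff ℝ (⊤ : ℕ∞) (fun w => ((Real.cosh (θ w) : ℝ) : ℂ)) :=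
  contDiff_ofReal (Real.contDiff_cosh.comp hθ)

lemma contDiff_conj (hg : ContDiff ℝ (⊤ : ℕ∞) g) :
    ContDiff ℝ (⊤ : ℕ∞) (fun w => (starRingEnd ℂ) (g w)) :=
  Complex.conjCLE.toContinuousLinearMap.contDiff.comp hg

end API3

/-- Core scalar argument: under the degeneracy hypotheses, `⟨E, f⟩ ≡ 0` and `sinh θ ≡ 0`. -/
lemma main_scalar {f : ℂ → Fin 5 → ℝ} {ρ θ : ℂ → ℝ} {E : Fin 5 → ℝ}
    (hf : IsConfMinImm f ρ) (hθs : ContDiff ℝ (⊤ : ℕ∞) θ)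
    (hdeg : ∀ z : ℂ, wirtZ (dZ θ) z + 2 * dZ ρ z * dZ θ z = 0)
    (hA : ∀ w : ℂ, pairC (cV E) (Hopf f ρ w)
        = -(Complex.I * ((Real.sinh (θ w) : ℝ) : ℂ) * ((Real.cosh (θ w) : ℝ) : ℂ)))
    (hQ : ∀ w : ℂ, pairC (Hopf f ρ w) (conjV (Hopf f ρ w))
        = ((Real.cosh (θ w) ^ 2 + Real.sinh (θ w) ^ 2 : ℝ) : ℂ)) :
    ∀ z : ℂ, pairC (cV E) (Fc f z) = 0 ∧ Real.sinh (θ z) = 0 := by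
  have hfs := hf.1
  have hρs := hf.2.1
  have hmin := hf.2.2.2.2.2
  set h0 : ℂ → ℂ := fun w => pairC (cV E) (Fc f w) with hh0
  have hsm0 : ContDiff ℝ (⊤ : ℕ∞) h0 := contDiff_pairC_const _ (fun i => contDiff_Fc hfs i)
  have hD1 : ∀ w, wirtZ h0 w = pairC (cV E) (WZ (Fc f) w) := fun w =>
    wirtZ_pairC_const (cV E) (diffAt_Fc hfs)
  have hD1fun : wirtZ h0 = fun w => pairC (cV E) (WZ (Fc f) w) := funext hD1
  have hsm1 : ContDiff ℝ (⊤ : ℕ∞) (wirtZ h0) := by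
    rw [hD1fun]; exact contDiff_pairC_const _ (fun i => contDiff_Fz hfs i)
  have hD2 : ∀ w, wirtZ (wirtZ h0) w = pairC (cV E) (WZ (WZ (Fc f)) w) := fun w => by
    rw [hD1fun]; exact wirtZ_pairC_const (cV E) (diffAt_Fz hfs)
  -- ∂z̄ ∂z h0 = -(1/2) e^{2ρ} h0
  have hDbar : ∀ w, wirtZbar (wirtZ h0) w
      = -(1/2 : ℂ) * (((Real.exp (2 * ρ w) : ℝ) : ℂ) * h0 w) := fun w => by
    rw [hD1fun, wirtZbar_pairC_const (cV E) (diffAt_Fz hfs),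
      show WZb (WZ (Fc f)) w = fun i => (-(1/2 : ℂ) * ((Real.exp (2 * ρ w) : ℝ) : ℂ)) * Fc f w i
        from funext fun i => by rw [hmin w i],
      pairC_smul_right]
    ring
  -- (A'): ∂z∂z h0 = -(I sinh cosh) + 2 ρ_z ∂z h0
  have hA' : ∀ w, wirtZ (wirtZ h0) w
      = -(Complex.I * ((Real.sinh (θ w) : ℝ) : ℂ) * ((Real.cosh (θ w) : ℝ) : ℂ))
        + 2 * dZ ρ w * wirtZ h0 w := fun w => by
    have hh := pairC_hopf (f := f) (ρ := ρ) (z := w) (cV E)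
    rw [hD2 w, hD1 w]
    linear_combination hA w - hh
  -- Step B: differentiate (A') in z̄ and use Gauss to get ∂z h0 = (I/2) e^{2ρ} conj(θ_z)
  have key : ∀ z, wirtZ h0 z
      = Complex.I / 2 * (((Real.exp (2 * ρ z) : ℝ) : ℂ) * (starRingEnd ℂ) (dZ θ z)) := by
    intro z
    have hA'fun : wirtZ (wirtZ h0)
        = fun w => (-Complex.I) * (((Real.sinh (θ w) : ℝ) : ℂ) * ((Real.cosh (θ w) : ℝ) : ℂ))
            + (2 * dZ ρ w) * wirtZ h0 w := funext fun w => by rw [hA' w]; ring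
    -- LHS: ∂z̄ ∂z ∂z h0 = ∂z ∂z̄ ∂z h0 = ∂z (-(1/2) e^{2ρ} h0)
    have hLHS : wirtZbar (wirtZ (wirtZ h0)) z
        = -(1/2 : ℂ) * (((Real.exp (2 * ρ z) : ℝ) : ℂ) * wirtZ h0 z)
          - dZ ρ z * ((Real.exp (2 * ρ z) : ℝ) : ℂ) * h0 z := by
      rw [← wirt_comm hsm1 z,
        show wirtZbar (wirtZ h0)
          = fun w => (-(1/2 : ℂ)) * (((Real.exp (2 * ρ w) : ℝ) : ℂ) * h0 w) from funext hDbar,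
        wirtZ_const_mul _ ((diffAt_expC hρs).fun_mul
          ((hsm0.differentiable (by simp)).differentiableAt)),
        wirtZ_mul (diffAt_expC hρs) ((hsm0.differentiable (by simp)).differentiableAt),
        wirtZ_exp hρs]
      ring
    -- RHS: ∂z̄ of the right side of (A')
    have hRHS : wirtZbar (wirtZ (wirtZ h0)) z
        = (-Complex.I) * (((Real.cosh (θ z) : ℝ) : ℂ) * ((Real.cosh (θ z) : ℝ) : ℂ)
              + ((Real.sinh (θ z) : ℝ) : ℂ) * ((Real.sinh (θ z) : ℝ) : ℂ))
            * (starRingEnd ℂ) (dZ θ z)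
          + 2 * dZ ρ z * (-(1/2 : ℂ) * (((Real.exp (2 * ρ z) : ℝ) : ℂ) * h0 z))
          + 2 * wirtZbar (dZ ρ) z * wirtZ h0 z := by
      rw [hA'fun, wirtZbar_add
        ((differentiableAt_const _).fun_mul (((contDiff_sinhC hθs).differentiable (by simp)
          |>.differentiableAt).fun_mul ((contDiff_coshC hθs).differentiable (by simp)
          |>.differentiableAt)))
        (((diffAt_dZ hρs).const_mul 2).fun_mul ((hsm1.differentiable (by simp)).differentiableAt)),
        wirtZbar_const_mul (-Complex.I)
          (((contDiff_sinhC hθs).differentiable (by simp) |>.differentiableAt).fun_mul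
            ((contDiff_coshC hθs).differentiable (by simp) |>.differentiableAt)),
        wirtZbar_mul ((contDiff_sinhC hθs).differentiable (by simp) |>.differentiableAt)
          ((contDiff_coshC hθs).differentiable (by simp) |>.differentiableAt),
        wirtZbar_sinh hθs, wirtZbar_cosh hθs,
        wirtZbar_mul ((diffAt_dZ hρs).const_mul 2)
          ((hsm1.differentiable (by simp)).differentiableAt),
        wirtZbar_const_mul 2 (diffAt_dZ hρs), hDbar z]
      ring
    have hG := cmi_gauss hf z
    have hQz := hQ z
    rw [Complex.ofReal_add, Complex.ofReal_pow, Complex.ofReal_pow] at hQz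
    have hEQ := hLHS.symm.trans hRHS
    -- multiply out and divide by cosh² + sinh² > 0
    have hq0 : (((Real.cosh (θ z) : ℝ) : ℂ) ^ 2 + ((Real.sinh (θ z) : ℝ) : ℂ) ^ 2) ≠ 0 := by
      rw [← Complex.ofReal_pow, ← Complex.ofReal_pow, ← Complex.ofReal_add,
        Complex.ofReal_ne_zero]
      nlinarith [Real.cosh_pos (θ z), sq_nonneg (Real.sinh (θ z))]
    have hmain : (((Real.cosh (θ z) : ℝ) : ℂ) ^ 2 + ((Real.sinh (θ z) : ℝ) : ℂ) ^ 2)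
        * (wirtZ h0 z
            - Complex.I / 2 * (((Real.exp (2 * ρ z) : ℝ) : ℂ) * (starRingEnd ℂ) (dZ θ z)))
        = 0 := by
      linear_combination (-(((Real.exp (2 * ρ z) : ℝ) : ℂ)) / 2) * hEQ
        - wirtZ h0 z * hG - wirtZ h0 z * hQz
    rcases mul_eq_zero.mp hmain with hbad | hgood
    · exact absurd hbad hq0
    · linear_combination hgood
  -- Step D: conclude h0 ≡ 0 using the degeneracy hypothesis
  have hcd : ContDiff ℝ (⊤ : ℕ∞) (fun w => (starRingEnd ℂ) (dZ θ w)) := contDiff_conj (contDiff_dZ hθs)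
  have hzero : ∀ z, h0 z = 0 := by
    intro z
    have hDfun : wirtZ h0 = fun w => Complex.I / 2
        * (((Real.exp (2 * ρ w) : ℝ) : ℂ) * (starRingEnd ℂ) (dZ θ w)) := funext key
    have e1 : wirtZbar (wirtZ h0) z = Complex.I / 2
        * (((Real.exp (2 * ρ z) : ℝ) : ℂ) * (starRingEnd ℂ) (wirtZ (dZ θ) z)
          + 2 * (starRingEnd ℂ) (dZ ρ z) * ((Real.exp (2 * ρ z) : ℝ) : ℂ)
            * (starRingEnd ℂ) (dZ θ z)) := by
      rw [hDfun, wirtZbar_const_mul _ ((diffAt_expC hρs).fun_mul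
          ((hcd.differentiable (by simp)).differentiableAt)),
        wirtZbar_mul (diffAt_expC hρs) ((hcd.differentiable (by simp)).differentiableAt),
        wirtZbar_exp hρs, wirtZbar_conj (diffAt_dZ hθs)]
    have hcc := congrArg (starRingEnd ℂ) (hdeg z)
    simp only [map_add, map_mul, map_zero, map_ofNat] at hcc
    have heq2 : -(1/2 : ℂ) * (((Real.exp (2 * ρ z) : ℝ) : ℂ) * h0 z)
        = Complex.I / 2
          * (((Real.exp (2 * ρ z) : ℝ) : ℂ) * (starRingEnd ℂ) (wirtZ (dZ θ) z)
            + 2 * (starRingEnd ℂ) (dZ ρ z) * ((Real.exp (2 * ρ z) : ℝ) : ℂ)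
              * (starRingEnd ℂ) (dZ θ z)) := (hDbar z).symm.trans e1
    have he : ((Real.exp (2 * ρ z) : ℝ) : ℂ) ≠ 0 :=
      Complex.ofReal_ne_zero.mpr (Real.exp_ne_zero _)
    have hez : ((Real.exp (2 * ρ z) : ℝ) : ℂ) * h0 z = 0 := by
      linear_combination (-2 : ℂ) * heq2 - Complex.I * ((Real.exp (2 * ρ z) : ℝ) : ℂ) * hcc
    exact (mul_eq_zero.mp hez).resolve_left he
  intro z
  refine ⟨hzero z, ?_⟩
  have hz0 : wirtZ h0 = fun _ => (0 : ℂ) := by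
    rw [show h0 = fun _ => (0 : ℂ) from funext hzero]
    exact funext fun w => wirtZ_const 0
  have hzz0 : wirtZ (wirtZ h0) z = 0 := by rw [hz0]; exact wirtZ_const 0
  have hw0 : wirtZ h0 z = 0 := by rw [hz0]
  have hfin := hA' z
  rw [hzz0, hw0] at hfin
  have h2 : Complex.I * (((Real.sinh (θ z) : ℝ) : ℂ) * ((Real.cosh (θ z) : ℝ) : ℂ)) = 0 := by
    linear_combination hfin
  have h3 := (mul_eq_zero.mp h2).resolve_left Complex.I_ne_zero
  have h4 : Real.sinh (θ z) * Real.cosh (θ z) = 0 := by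
    have h5 : ((Real.sinh (θ z) * Real.cosh (θ z) : ℝ) : ℂ) = 0 := by
      rw [Complex.ofReal_mul]; exact h3
    exact Complex.ofReal_eq_zero.mp h5
  exact (mul_eq_zero.mp h4).resolve_right (Real.cosh_pos _).ne'

lemma pairC_real {m : ℕ} (E v : Fin m → ℝ) :
    pairC (cV E) (cV v) = ((∑ i, E i * v i : ℝ) : ℂ) := by
  unfold pairC cV
  push_cast
  rfl

/-- the degenerate case forces non-fullness: if `θ_{zz} + 2 ρ_z θ_z ≡ 0` and
`cosh θ · ψ₄ + E^⊥ ≡ 0` for some constant vector `E`, then `sinh θ ≡ 0` and the image of `f`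
lies in a real linear subspace of `ℝ⁵` of dimension at most `4` (so `f` is not full). -/
theorem degenerate_case_not_full (f : ℂ → Fin 5 → ℝ) (ρ : ℂ → ℝ)
    (hf : IsConfMinImm f ρ)
    (ψ₃ ψ₄ : ℂ → Fin 5 → ℝ) (θ : ℂ → ℝ) (hframe : S4Frame f ρ ψ₃ ψ₄ θ)
    (hdeg : ∀ z : ℂ, wirtZ (dZ θ) z + 2 * dZ ρ z * dZ θ z = 0)
    (hE : ∃ E : Fin 5 → ℝ, ∀ (z : ℂ) (i : Fin 5),
      ((Real.cosh (θ z) : ℝ) : ℂ) * ((ψ₄ z i : ℝ) : ℂ) + Eperp f ρ E z i = 0) :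
    (∀ z : ℂ, Real.sinh (θ z) = 0) ∧
    ∃ V : Submodule ℝ (Fin 5 → ℝ), Module.finrank ℝ V ≤ 4 ∧ ∀ z : ℂ, f z ∈ V := by
  obtain ⟨E, hEq⟩ := hE
  obtain ⟨hψ₃s, hψ₄s, hθs, hn3, hn4, hu3, hu4, hortho, hΩΩ, hRe, hIm⟩ := hframe
  -- relation (A): ⟨E, Ω⟩ = −i sinh θ cosh θ
  have hA : ∀ w : ℂ, pairC (cV E) (Hopf f ρ w)
      = -(Complex.I * ((Real.sinh (θ w) : ℝ) : ℂ) * ((Real.cosh (θ w) : ℝ) : ℂ)) := by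
    intro w
    have h1 := fr_pair_Eperp hEq (Hopf f ρ w) w
    have h2 := pairC_Eperp (f := f) (ρ := ρ) (z := w) (Hopf f ρ w) E
    rw [pairC_comm (Hopf f ρ w) (Fc f w), hopf_f hf w,
      pairC_comm (Hopf f ρ w) (WZb (Fc f) w), hopf_fzb hf w,
      pairC_comm (Hopf f ρ w) (WZ (Fc f) w), hopf_fz hf w] at h2
    rw [pairC_comm (Hopf f ρ w) (Fc ψ₄ w), fr_pair_psi4_hopf hRe hIm hu4 hortho w] at h1
    rw [pairC_comm (cV E) (Hopf f ρ w)]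
    linear_combination h1 - h2
  have hQm := fr_hopf_normSq (ρ := ρ) hRe hIm hu3 hu4
  have hms := main_scalar hf hθs hdeg hA hQm
  refine ⟨fun z => (hms z).2, ?_⟩
  -- ⟨E, ψ₄⟩ = −cosh θ, so E ≠ 0
  have hEψ : ∀ w : ℂ, pairC (cV E) (Fc ψ₄ w) = -((Real.cosh (θ w) : ℝ) : ℂ) := by
    intro w
    have h1 := fr_pair_Eperp hEq (Fc ψ₄ w) w
    have h2 := pairC_Eperp (f := f) (ρ := ρ) (z := w) (Fc ψ₄ w) E
    obtain ⟨hm1, hm2, hm3⟩ := hn4 w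
    rw [hm1, hm2, hm3] at h2
    rw [fr_pair_psi4_psi4 hu4 w] at h1
    rw [pairC_comm (cV E) (Fc ψ₄ w)]
    linear_combination h1 - h2
  -- the linear functional x ↦ ⟨E, x⟩
  set φ : (Fin 5 → ℝ) →ₗ[ℝ] ℝ := ∑ i, E i • LinearMap.proj i with hφdef
  have hφ : ∀ x, φ x = ∑ i, E i * x i := by
    intro x
    simp [hφdef, LinearMap.proj_apply]
  have hker : ∀ z, f z ∈ LinearMap.ker φ := by
    intro z
    rw [LinearMap.mem_ker, hφ]
    have h5 : ((∑ i, E i * f z i : ℝ) : ℂ) = 0 := by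
      rw [← pairC_real]
      exact (hms z).1
    exact Complex.ofReal_eq_zero.mp h5
  have hφne : φ (ψ₄ 0) ≠ 0 := by
    rw [hφ]
    have h6 : ((∑ i, E i * ψ₄ 0 i : ℝ) : ℂ) = -((Real.cosh (θ 0) : ℝ) : ℂ) := by
      rw [← pairC_real]
      exact hEψ 0
    rw [← Complex.ofReal_neg] at h6
    rw [Complex.ofReal_inj.mp h6]
    simpa using (Real.cosh_pos (θ 0)).ne'
  refine ⟨LinearMap.ker φ, ?_, hker⟩
  have hrank := LinearMap.finrank_range_add_finrank_ker φ
  have hsur : LinearMap.range φ = ⊤ := by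
    rw [LinearMap.range_eq_top]
    intro y
    exact ⟨(y / φ (ψ₄ 0)) • ψ₄ 0, by rw [map_smul, smul_eq_mul, div_mul_cancel₀ _ hφne]⟩
  rw [hsur, finrank_top] at hrank
  have h5' : Module.finrank ℝ (Fin 5 → ℝ) = 5 := by
    simp [Module.finrank_pi]
  have h1' : Module.finrank ℝ ℝ = 1 := Module.finrank_self ℝ
  omega
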